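/- Let X be an n×n matrix with nonnegative entries that is sum-symmetric (for each index j, the j-th row sum equals the j-th column sum), and let a, b ∈ ℝⁿ form a monotone pair (meaning (a_i - a_j)(b_i - b_j) ≥ 0 for all i, j). Then the sum of the entries of the entrywise product a·(Xb) is at most the sum of the entries of X(a·b), where a·b denotes the entrywise product. -/

import Mathlib

/-!
The difference of the two sides, `∑ i j, X i j (a j - a i) b j`, is linear in `a` and vanishes on
constants. Sum-symmetry means `∑ i j, X i j (f j - f i) = 0` for every `f`, so `b` may be replaced by
`b - t` for any constant `t`. For the indicator `f` of an upper level set `{a > s}`, monovariance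
gives a `t` separating the values of `b` on and off that set, and then every term
`X i j (f j - f i) (b j - t)` is nonnegative. Writing `a` as a constant plus nonnegative multiples of
such indicators (layer cake) gives the inequality.
-/

open Finset

lemma Monovary.exists_separating_upperLevel {ι α β : Type*} [Finite ι] [LinearOrder α]
    [LinearOrder β] [Nonempty β] {a : ι → α} {b : ι → β} (h : Monovary b a) (s : α) :
    ∃ t, (∀ j, s < a j → t ≤ b j) ∧ ∀ j, ¬s < a j → b j ≤ t := by
  rcases em (∃ j, s < a j) with ⟨j₁, hj₁⟩ | hS
  · have := Fintype.ofFinite ι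
    obtain ⟨j₀, hj₀, hmin⟩ := (univ.filter (s < a ·)).exists_min_image b ⟨j₁, by simpa using hj₁⟩
    simp only [mem_filter, mem_univ, true_and] at hj₀ hmin
    exact ⟨b j₀, hmin, fun j hj => h ((not_lt.1 hj).trans_lt hj₀)⟩
  · obtain ⟨t, ht⟩ := (Set.finite_range b).bddAbove
    exact ⟨t, fun j hj => (hS ⟨j, hj⟩).elim, fun j _ => ht ⟨j, rfl⟩⟩

namespace Matrix

variable {ι R : Type*} [Fintype ι]

def IsSumSymm [AddCommMonoid R] (X : Matrix ι ι R) : Prop :=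
  ∀ j, ∑ k, X j k = ∑ k, X k j

section CommRing

variable [CommRing R]

def chebyshevGap (X : Matrix ι ι R) (a b : ι → R) : R :=
  ∑ i, ∑ j, X i j * (a j - a i) * b j

lemma sum_mulVec_mul_sub_sum_mul_mulVec (X : Matrix ι ι R) (a b : ι → R) :
    ∑ i, (X *ᵥ (a * b)) i - ∑ i, a i * (X *ᵥ b) i = X.chebyshevGap a b := by
  simp only [chebyshevGap, mulVec, dotProduct, Pi.mul_apply, mul_sum, ← sum_sub_distrib]
  exact sum_congr rfl fun i _ => sum_congr rfl fun j _ => by ring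

lemma chebyshevGap_const_left (X : Matrix ι ι R) (c : R) (b : ι → R) :
    X.chebyshevGap (fun _ => c) b = 0 := by
  simp [chebyshevGap]

lemma chebyshevGap_add_mul_left (X : Matrix ι ι R) (f g b : ι → R) (c : R) :
    X.chebyshevGap (fun i => f i + c * g i) b = X.chebyshevGap f b + c * X.chebyshevGap g b := by
  simp only [chebyshevGap, mul_sum, ← sum_add_distrib]
  exact sum_congr rfl fun i _ => sum_congr rfl fun j _ => by ring

lemma IsSumSymm.sum_sum_mul_sub_eq_zero {X : Matrix ι ι R} (hsym : X.IsSumSymm) (f : ι → R) :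
    ∑ i, ∑ j, X i j * (f j - f i) = 0 := by
  have hcol : ∑ i, ∑ j, X i j * f j = ∑ j, (∑ k, X j k) * f j := by
    rw [sum_comm]
    exact sum_congr rfl fun j _ => by rw [hsym j, sum_mul]
  simp only [mul_sub, sum_sub_distrib, hcol, sum_mul, sub_self]

lemma IsSumSymm.chebyshevGap_eq_sum_sum_mul_sub {X : Matrix ι ι R} (hsym : X.IsSumSymm)
    (f b : ι → R) (t : R) :
    X.chebyshevGap f b = ∑ i, ∑ j, X i j * (f j - f i) * (b j - t) := by
  calc X.chebyshevGap f b = X.chebyshevGap f b - t * ∑ i, ∑ j, X i j * (f j - f i) := by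
        rw [hsym.sum_sum_mul_sub_eq_zero, mul_zero, sub_zero]
    _ = _ := by
        simp only [chebyshevGap, mul_sum, ← sum_sub_distrib]
        exact sum_congr rfl fun i _ => sum_congr rfl fun j _ => by ring

end CommRing

variable [CommRing R] [LinearOrder R] [IsStrictOrderedRing R]
  {X : Matrix ι ι R} {a b : ι → R}

lemma IsSumSymm.chebyshevGap_indicator_nonneg (hX : ∀ i j, 0 ≤ X i j) (hsym : X.IsSumSymm)
    (p : ι → Prop) [DecidablePred p] (t : R) (hp : ∀ j, p j → t ≤ b j)
    (hnp : ∀ j, ¬p j → b j ≤ t) :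
    0 ≤ X.chebyshevGap (fun i => if p i then 1 else 0) b := by
  rw [hsym.chebyshevGap_eq_sum_sum_mul_sub _ _ t]
  refine sum_nonneg fun i _ => sum_nonneg fun j _ => ?_
  rw [mul_assoc]
  refine mul_nonneg (hX i j) ?_
  by_cases hj : p j
  · exact mul_nonneg (by simp only [hj, if_true]; split_ifs <;> norm_num) (sub_nonneg.2 (hp j hj))
  · exact mul_nonneg_of_nonpos_of_nonpos (by simp only [hj, if_false]; split_ifs <;> norm_num)
      (sub_nonpos.2 (hnp j hj))

lemma IsSumSymm.chebyshevGap_upperLevel_nonneg (hX : ∀ i j, 0 ≤ X i j) (hsym : X.IsSumSymm)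
    (h : Monovary b a) (s : R) :
    0 ≤ X.chebyshevGap (fun i => if s < a i then 1 else 0) b := by
  obtain ⟨t, hS, hSc⟩ := h.exists_separating_upperLevel s
  exact hsym.chebyshevGap_indicator_nonneg hX _ t hS hSc

theorem IsSumSymm.chebyshevGap_nonneg (hX : ∀ i j, 0 ≤ X i j) (hsym : X.IsSumSymm)
    (h : Monovary b a) : 0 ≤ X.chebyshevGap a b := by
  classical
  suffices key : ∀ (s : Finset R) (a : ι → R), (∀ i, a i ∈ s) → Monovary b a →
      0 ≤ X.chebyshevGap a b from
    key (univ.image a) a (fun i => mem_image_of_mem a (mem_univ i)) h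
  intro s
  induction s using Finset.induction_on_max with
  | empty =>
    intro a ha _
    have : IsEmpty ι := ⟨fun i => by simpa using ha i⟩
    simp [chebyshevGap]
  | insert M s hlt ih =>
    intro a ha h
    rcases s.eq_empty_or_nonempty with rfl | hs
    · obtain rfl : a = fun _ => M := funext fun i => by simpa using ha i
      rw [chebyshevGap_const_left]
    -- Cut `a` at the second largest value `t`: the part below `t` has one value fewer.
    set t := s.max' hs
    have htM : t < M := hlt t (s.max'_mem hs)
    have hcut : ∀ i, a i = min (a i) t + (M - t) * if t < a i then 1 else 0 := fun i => by
      rcases mem_insert.1 (ha i) with hi | hi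
      · rw [hi, min_eq_right htM.le, if_pos htM]
        ring
      · have hle : a i ≤ t := s.le_max' _ hi
        simp [hle, not_lt.2 hle]
    have hmin_mem : ∀ i, min (a i) t ∈ s := fun i => by
      rcases mem_insert.1 (ha i) with hi | hi
      · simpa [hi, htM.le] using s.max'_mem hs
      · rwa [min_eq_left (s.le_max' _ hi)]
    have hmin_vary : Monovary b fun i => min (a i) t := fun i j hij =>
      h ((monotone_id.min monotone_const).reflect_lt hij)
    calc 0 ≤ X.chebyshevGap (fun i => min (a i) t) b +
          (M - t) * X.chebyshevGap (fun i => if t < a i then 1 else 0) b :=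
          add_nonneg (ih _ hmin_mem hmin_vary)
            (mul_nonneg (sub_nonneg.2 htM.le) (hsym.chebyshevGap_upperLevel_nonneg hX h t))
      _ = X.chebyshevGap a b := by
          rw [← chebyshevGap_add_mul_left]
          exact congrArg (X.chebyshevGap · b) (funext hcut).symm

end Matrix

open Matrix

theorem sum_symmetric_chebyshev {n : ℕ} (X : Matrix (Fin n) (Fin n) ℝ)
    (hX : ∀ i j, 0 ≤ X i j) (hsym : ∀ j, ∑ k, X j k = ∑ k, X k j)
    (a b : Fin n → ℝ) (hmono : ∀ i j, 0 ≤ (a i - a j) * (b i - b j)) :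
    ∑ i, a i * X.mulVec b i ≤ ∑ i, X.mulVec (a * b) i := by
  have hvary : Monovary b a :=
    monovary_iff_forall_mul_nonneg.2 fun i j => by rw [mul_comm]; exact hmono j i
  rw [← sub_nonneg, sum_mulVec_mul_sub_sum_mul_mulVec]
  exact IsSumSymm.chebyshevGap_nonneg hX hsym hvary
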